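/- Let G be a finite abelian group of order v. Suppose {D_0,D_1,D_2,D_3} is a symmetric difference family of type H in G satisfying (d3), and {S_0,S_1} is a difference family of type H_2* in G. Define in G × ℤ/3ℤ: B_0 = D_0×{1} ∪ (G∖D_2)×{2} ∪ S_0×{0}, B_1 = D_3×{1} ∪ (G∖D_1)×{2} ∪ S_1×{0}, B_2 = (G∖D_0)×{1} ∪ D_2×{2} ∪ S_0×{0}, B_3 = (G∖D_3)×{1} ∪ D_1×{2} ∪ S_1×{0}. Then {B_0,B_1,B_2,B_3} is a difference family of type H_4* in G × ℤ/3ℤ. -/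

import Mathlib

open Finset

noncomputable section

variable {G : Type*}

/-- The element of the group ring `ℤ[G]` associated to a finite subset `D ⊆ G`. -/
def grp [AddCommGroup G] [DecidableEq G] (D : Finset G) : AddMonoidAlgebra ℤ G :=
  ∑ x ∈ D, AddMonoidAlgebra.single x 1

/-- `D^{(-1)} = {-x : x ∈ D}`. -/
def negSet [AddCommGroup G] [DecidableEq G] (D : Finset G) : Finset G :=
  D.image (fun x => -x)

/-- A subset is symmetric if `D = -D`. -/
def IsSymmetric [AddCommGroup G] [DecidableEq G] (D : Finset G) : Prop :=
  negSet D = D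

/-- `G* = G \ {0}` as a finset. -/
def Gstar (G : Type*) [AddCommGroup G] [Fintype G] [DecidableEq G] : Finset G :=
  Finset.univ \ {0}

/-- A difference family of type `H`: four blocks with `λ = Σ|D_i| - |G|`. -/
def IsTypeH [AddCommGroup G] [Fintype G] [DecidableEq G] (D : Fin 4 → Finset G) : Prop :=
  ∑ i, grp (D i) * grp (negSet (D i)) =
    ((∑ i, ((D i).card : ℤ)) - (Fintype.card G : ℤ)) • grp (Finset.univ : Finset G)
      + (Fintype.card G : ℤ) • AddMonoidAlgebra.single (0 : G) (1 : ℤ)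

/-- A difference family of type `H_4^*`: four blocks with `λ = Σ|B_i| - (|G|+1)`. -/
def IsTypeH4star [AddCommGroup G] [Fintype G] [DecidableEq G] (B : Fin 4 → Finset G) : Prop :=
  ∑ i, grp (B i) * grp (negSet (B i)) =
    ((∑ i, ((B i).card : ℤ)) - ((Fintype.card G : ℤ) + 1)) • grp (Finset.univ : Finset G)
      + ((Fintype.card G : ℤ) + 1) • AddMonoidAlgebra.single (0 : G) (1 : ℤ)

/-- A difference family of type `H_2^*`: two blocks with `λ = Σ|S_i| - (|G|+1)/2`. -/
def IsTypeH2star [AddCommGroup G] [Fintype G] [DecidableEq G] (S : Fin 2 → Finset G) : Prop :=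
  ∑ i, grp (S i) * grp (negSet (S i)) =
    ((∑ i, ((S i).card : ℤ)) - ((Fintype.card G : ℤ) + 1) / 2) • grp (Finset.univ : Finset G)
      + (((Fintype.card G : ℤ) + 1) / 2) • AddMonoidAlgebra.single (0 : G) (1 : ℤ)

/-- Condition (d3). -/
def CondD3 [AddCommGroup G] [Fintype G] [DecidableEq G] (D : Fin 4 → Finset G) : Prop :=
  grp (D 0) * grp (negSet (D 2)) + grp (D 2) * grp (negSet (D 0))
    + grp (D 1) * grp (negSet (D 3)) + grp (D 3) * grp (negSet (D 1)) =
    ((∑ i, ((D i).card : ℤ)) - (Fintype.card G : ℤ) + 1) • grp (Finset.univ : Finset G)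

/-- Condition (c1). -/
def CondC1 [AddCommGroup G] [Fintype G] [DecidableEq G] (S : Fin 4 → Finset G) : Prop :=
  grp (S 0) * grp (negSet (S 2)) + grp (S 2) * grp (negSet (S 0))
    + grp (S 1) * grp (negSet (S 3)) + grp (S 3) * grp (negSet (S 1)) =
    ((∑ i, ((S i).card : ℤ)) - (Fintype.card G : ℤ)) • grp (Finset.univ : Finset G)

/-- Condition (d2). -/
def CondD2 [AddCommGroup G] [Fintype G] [DecidableEq G] (D : Fin 4 → Finset G) : Prop :=
  ∃ E₀ E₁ : Finset G, E₀ ⊆ Gstar G ∧ E₁ ⊆ Gstar G ∧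
    grp (D 0) + grp (D 1) - grp (D 2) - grp (D 3) = grp E₀ - grp (Gstar G \ E₀) ∧
    grp (D 0) + grp (D 3) - grp (D 1) - grp (D 2) = grp E₁ - grp (Gstar G \ E₁) ∧
    IsTypeH4star ![E₀, E₁, Gstar G \ E₀, Gstar G \ E₁]

/-- A building family: eight symmetric, pairwise disjoint subsets partitioning `G*`,
satisfying (a3) and (a4). -/
def IsBuildingFamily [AddCommGroup G] [Fintype G] [DecidableEq G] (A : Fin 8 → Finset G) : Prop :=
  (∀ i, IsSymmetric (A i)) ∧
  (∀ i j, i ≠ j → Disjoint (A i) (A j)) ∧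
  (Finset.univ.biUnion A = Gstar G) ∧
  IsTypeH4star ![A 0 ∪ A 1 ∪ A 6 ∪ A 7, A 2 ∪ A 3 ∪ A 4 ∪ A 5,
    A 0 ∪ A 3 ∪ A 5 ∪ A 6, A 1 ∪ A 2 ∪ A 4 ∪ A 7] ∧
  (∑ i, grp (A i) * grp (A i)) - (∑ i, grp (A i) * grp (A (i + 4))) =
    ((Fintype.card G : ℤ) - 1) • AddMonoidAlgebra.single (0 : G) (1 : ℤ)
      + ((grp (A 0) + grp (A 1) + grp (A 2) + grp (A 3))
        - (grp (A 4) + grp (A 5) + grp (A 6) + grp (A 7)))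

end

/-! Write `ω` for the point `(0, 1)` of `G × ℤ/3ℤ` in the group ring, so that every block is
`X ω + Y ω² + Z` with `X, Y, Z ∈ ℤ[G]` and, the `D_i` being symmetric, its inverse is
`Y ω + X ω² + Z⁽⁻¹⁾`. Expanding `Σ B_i B_i⁽⁻¹⁾` with `ω³ = 1`, the squares `D_i²` are governed by
type `H`, the cross terms `D_0 D_2 + D_1 D_3` by (d3), the `S`-part by type `H_2^*`, and every
product with `G` collapses to a multiple of `G`.

The identity needs `2 λ' = v + 1`, i.e. `v` odd (the definition of `H_2^*` divides in `ℤ`).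
Augmenting the type-`H` equation gives `Σ |D_i|² = v (Σ |D_i| - v + 1)`, and the coefficient of `0`
in (d3) gives `Σ |D_i| - v + 1 = 2 (|D_0 ∩ D_2| + |D_1 ∩ D_3|)`; so `Σ |D_i|² ≡ Σ |D_i|` is even,
and then so is `v + 1`. -/

open AddMonoidAlgebra

section GroupRing

variable {G : Type*} [AddCommGroup G]

noncomputable def augmentation (G : Type*) [AddCommGroup G] : AddMonoidAlgebra ℤ G →ₐ[ℤ] ℤ :=
  lift ℤ ℤ G 1

lemma augmentation_single (a : G) (r : ℤ) : augmentation G (single a r) = r := by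
  simp [augmentation, lift_single]

variable [DecidableEq G]

lemma grp_union {A B : Finset G} (h : Disjoint A B) : grp (A ∪ B) = grp A + grp B :=
  Finset.sum_union h

lemma grp_univ_sdiff [Fintype G] (A : Finset G) : grp (univ \ A) = grp univ - grp A :=
  eq_sub_of_add_eq (Finset.sum_sdiff (subset_univ A))

lemma mem_negSet {A : Finset G} {x : G} : x ∈ negSet A ↔ -x ∈ A := by
  simp [negSet, neg_eq_iff_eq_neg]

lemma card_negSet (A : Finset G) : #(negSet A) = #A :=
  card_image_of_injective _ neg_injective

lemma grp_negSet (A : Finset G) : grp (negSet A) = ∑ a ∈ A, single (-a) 1 :=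
  sum_image fun _ _ _ _ => neg_inj.mp

lemma negSet_union (A B : Finset G) : negSet (A ∪ B) = negSet A ∪ negSet B :=
  image_union _ _

lemma negSet_univ_sdiff [Fintype G] (A : Finset G) : negSet (univ \ A) = univ \ negSet A := by
  ext x; simp [mem_negSet]

lemma grp_mul_grp_univ [Fintype G] (A : Finset G) :
    grp A * grp (univ : Finset G) = (#A : ℤ) • grp (univ : Finset G) := by
  have translate (a : G) : single a (1 : ℤ) * grp (univ : Finset G) = grp univ := by
    rw [grp, Finset.mul_sum]
    exact Fintype.sum_equiv (Equiv.addLeft a) _ _ fun x => by simp [single_mul_single]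
  rw [grp, Finset.sum_mul, Finset.sum_congr rfl fun a _ => translate a, sum_const,
    natCast_zsmul]

lemma map_grp_mul_map_grp_univ [Fintype G] {R : Type*} [Semiring R]
    (f : AddMonoidAlgebra ℤ G →+* R) (A : Finset G) :
    f (grp A) * f (grp univ) = #A * f (grp univ) := by
  simpa using congrArg f (grp_mul_grp_univ A)

lemma coeff_zero_grp_mul_grp_negSet (A B : Finset G) :
    (grp A * grp (negSet B)).coeff 0 = #(A ∩ B) := by
  rw [grp_negSet, grp, Finset.sum_mul_sum]
  simp [single_mul_single, coeff_sum, coeff_single, Finsupp.single_apply, ← sub_eq_add_neg,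
    sub_eq_zero]

lemma coeff_zero_grp_univ [Fintype G] : (grp (univ : Finset G)).coeff 0 = 1 := by
  simp [grp, coeff_sum, coeff_single, Finsupp.single_apply]

lemma augmentation_grp (A : Finset G) : augmentation G (grp A) = #A := by
  simp [grp, augmentation_single]

end GroupRing

lemma odd_card_of_isTypeH_of_condD3 {G : Type*} [AddCommGroup G] [Fintype G] [DecidableEq G]
    {D : Fin 4 → Finset G} (hH : IsTypeH D) (hd3 : CondD3 D) : Odd (Fintype.card G) := by
  have hsq := congrArg (augmentation G) hH
  simp only [map_sum, map_add, map_mul, map_zsmul, augmentation_grp, card_negSet,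
    augmentation_single, card_univ] at hsq
  have hdiag := congrArg (fun x => x.coeff 0) hd3
  simp only [coeff_add, coeff_smul, Finsupp.add_apply, Finsupp.smul_apply,
    coeff_zero_grp_mul_grp_negSet, coeff_zero_grp_univ] at hdiag
  simp only [Fin.sum_univ_four, smul_eq_mul, mul_one, inter_comm (D 2), inter_comm (D 3)]
    at hsq hdiag
  rw [← Int.odd_coe_nat]
  set v : ℤ := (Fintype.card G : ℤ)
  obtain ⟨k0, hk0⟩ := Int.even_mul_pred_self #(D 0)
  obtain ⟨k1, hk1⟩ := Int.even_mul_pred_self #(D 1)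
  obtain ⟨k2, hk2⟩ := Int.even_mul_pred_self #(D 2)
  obtain ⟨k3, hk3⟩ := Int.even_mul_pred_self #(D 3)
  exact ⟨v * (#(D 0 ∩ D 2) + #(D 1 ∩ D 3)) - (k0 + k1 + k2 + k3) - (#(D 0 ∩ D 2) + #(D 1 ∩ D 3)),
    by linear_combination (1 - v) * hdiag + hsq - hk0 - hk1 - hk2 - hk3⟩

section Product

variable {G H : Type*} [AddCommGroup G] [DecidableEq G] [AddCommGroup H] [DecidableEq H]

lemma negSet_product (A : Finset G) (B : Finset H) : negSet (A ×ˢ B) = negSet A ×ˢ negSet B := by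
  ext; simp [mem_negSet]

lemma grp_product_singleton (A : Finset G) (c : H) :
    grp (A ×ˢ {c}) = mapDomainRingHom ℤ (AddMonoidHom.inl G H) (grp A) * single (0, c) 1 := by
  simp [grp, mapDomainRingHom, mapDomain_single, sum_mul, single_mul_single]

end Product

lemma single_zero_one_pow_three {G : Type*} [AddCommGroup G] :
    single ((0 : G), (1 : ZMod 3)) (1 : ℤ) ^ 3 = 1 := by
  rw [single_pow, one_pow, Prod.smul_mk, smul_zero, show (3 • 1 : ZMod 3) = 0 from rfl,
    Prod.mk_zero_zero, one_def]

section Layers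

variable {G : Type*} [DecidableEq G]

lemma disjoint_layers (A B C : Finset G) :
    Disjoint (A ×ˢ {1}) (B ×ˢ ({2} : Finset (ZMod 3))) ∧
      Disjoint (A ×ˢ {1} ∪ B ×ˢ {2}) (C ×ˢ ({0} : Finset (ZMod 3))) := by
  refine ⟨?_, disjoint_union_left.mpr ⟨?_, ?_⟩⟩ <;>
    exact disjoint_product.mpr (.inr (disjoint_singleton.mpr (by decide)))

lemma card_layers (A B C : Finset G) :
    #(A ×ˢ {1} ∪ B ×ˢ {2} ∪ C ×ˢ ({0} : Finset (ZMod 3))) = #A + #B + #C := by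
  rw [card_union_of_disjoint (disjoint_layers A B C).2,
    card_union_of_disjoint (disjoint_layers A B C).1]
  simp

lemma univ_eq_layers [Fintype G] :
    (univ : Finset (G × ZMod 3)) = univ ×ˢ {1} ∪ univ ×ˢ {2} ∪ univ ×ˢ {0} := by
  ext ⟨x, c⟩
  simp only [mem_union, mem_product, mem_singleton, mem_univ, true_and]
  revert c; decide

variable [AddCommGroup G]

lemma negSet_layers (A B C : Finset G) :
    negSet (A ×ˢ {1} ∪ B ×ˢ {2} ∪ C ×ˢ ({0} : Finset (ZMod 3))) =
      negSet B ×ˢ {1} ∪ negSet A ×ˢ {2} ∪ negSet C ×ˢ {0} := by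
  ext ⟨x, c⟩
  simp only [negSet_union, negSet_product, mem_union, mem_product, mem_negSet]
  fin_cases c <;> simp <;> tauto

lemma grp_layers (A B C : Finset G) :
    grp (A ×ˢ {1} ∪ B ×ˢ {2} ∪ C ×ˢ ({0} : Finset (ZMod 3))) =
      mapDomainRingHom ℤ (AddMonoidHom.inl G (ZMod 3)) (grp A) * single (0, 1) 1 +
      mapDomainRingHom ℤ (AddMonoidHom.inl G (ZMod 3)) (grp B) * single (0, 1) 1 ^ 2 +
      mapDomainRingHom ℤ (AddMonoidHom.inl G (ZMod 3)) (grp C) := by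
  rw [grp_union (disjoint_layers A B C).2, grp_union (disjoint_layers A B C).1,
    grp_product_singleton, grp_product_singleton, grp_product_singleton, single_pow]
  simp [Prod.mk_zero_zero, ← one_def]

end Layers

/-- With `ω` the generator of `ℤ/3ℤ`, `X_i`, `S_j`, `T_j`, `g` the images of `D_i`, `S_j`, `S_j⁽⁻¹⁾`
and `G`, the left side is `Σ B_i B_i⁽⁻¹⁾`. -/
lemma sum_layered_blocks_mul_conj {R : Type*} [CommRing R]
    {ω g X0 X1 X2 X3 S0 S1 T0 T1 n0 n1 n2 n3 m0 m1 v lam : R} (hω : ω ^ 3 = 1)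
    (hX : X0 * X0 + X1 * X1 + X2 * X2 + X3 * X3 = (n0 + n1 + n2 + n3 - v) * g + v)
    (hX02 : X0 * X2 + X2 * X0 + X1 * X3 + X3 * X1 = (n0 + n1 + n2 + n3 - v + 1) * g)
    (hS : S0 * T0 + S1 * T1 = (m0 + m1 - lam) * g + lam) (hlam : 2 * lam = v + 1)
    (hX0 : X0 * g = n0 * g) (hX1 : X1 * g = n1 * g) (hX2 : X2 * g = n2 * g)
    (hX3 : X3 * g = n3 * g) (hS0 : S0 * g = m0 * g) (hS1 : S1 * g = m1 * g)
    (hT0 : T0 * g = m0 * g) (hT1 : T1 * g = m1 * g) (hg : g * g = v * g) :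
    (X0 * ω + (g - X2) * ω ^ 2 + S0) * ((g - X2) * ω + X0 * ω ^ 2 + T0)
      + (X3 * ω + (g - X1) * ω ^ 2 + S1) * ((g - X1) * ω + X3 * ω ^ 2 + T1)
      + ((g - X0) * ω + X2 * ω ^ 2 + S0) * (X2 * ω + (g - X0) * ω ^ 2 + T0)
      + ((g - X3) * ω + X1 * ω ^ 2 + S1) * (X1 * ω + (g - X3) * ω ^ 2 + T1)
      = (v + 2 * (m0 + m1) - 1) * (g * (ω + ω ^ 2 + 1)) + (3 * v + 1) := by
  linear_combination
    (2 * (X0 * X0 + X1 * X1 + X2 * X2 + X3 * X3) + 4 * g * g - 2 * g * (X0 + X1 + X2 + X3)) * hω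
    + (g * (X0 + X1 + X2 + X3) - (X0 * X2 + X2 * X0 + X1 * X3 + X3 * X1)) * ω * hω
    + 2 * hX + 4 * hg + (ω + ω ^ 2 - 2) * (hX0 + hX1 + hX2 + hX3) - (ω + ω ^ 2) * hX02
    + (ω + ω ^ 2) * (hS0 + hS1 + hT0 + hT1) + 2 * hS + (1 - g) * hlam

/-- product construction with `ℤ/3ℤ` from a symmetric type-`H` family
satisfying (d3) and a type-`H_2^*` family. -/
theorem product_construction_Z3 {G : Type*} [AddCommGroup G] [Fintype G] [DecidableEq G]
    (D : Fin 4 → Finset G) (S : Fin 2 → Finset G)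
    (hsym : ∀ i, IsSymmetric (D i)) (hH : IsTypeH D) (hd3 : CondD3 D)
    (hS : IsTypeH2star S) :
    IsTypeH4star (G := G × ZMod 3)
      ![(D 0) ×ˢ ({1} : Finset (ZMod 3)) ∪ ((Finset.univ : Finset G) \ D 2) ×ˢ {2}
          ∪ (S 0) ×ˢ {0},
        (D 3) ×ˢ ({1} : Finset (ZMod 3)) ∪ ((Finset.univ : Finset G) \ D 1) ×ˢ {2}
          ∪ (S 1) ×ˢ {0},
        ((Finset.univ : Finset G) \ D 0) ×ˢ ({1} : Finset (ZMod 3)) ∪ (D 2) ×ˢ {2}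
          ∪ (S 0) ×ˢ {0},
        ((Finset.univ : Finset G) \ D 3) ×ˢ ({1} : Finset (ZMod 3)) ∪ (D 1) ×ˢ {2}
          ∪ (S 1) ×ˢ {0}] := by
  have hs : ∀ i, negSet (D i) = D i := hsym
  have hlam : 2 * (((Fintype.card G : ℤ) + 1) / 2) = (Fintype.card G : ℤ) + 1 :=
    Int.two_mul_ediv_two_of_even (odd_card_of_isTypeH_of_condD3 hH hd3).natCast.add_one
  simp only [IsTypeH, CondD3, IsTypeH2star, IsTypeH4star, ← one_def, Fin.sum_univ_four,
    Fin.sum_univ_two, Matrix.cons_val_zero, Matrix.cons_val_one, Matrix.head_cons,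
    Matrix.cons_val_two, Matrix.tail_cons, Matrix.cons_val_three, hs, negSet_layers,
    negSet_univ_sdiff, card_layers, grp_layers, grp_univ_sdiff, univ_eq_layers, map_sub,
    zsmul_eq_mul] at hH hd3 hS ⊢
  set φ := mapDomainRingHom ℤ (AddMonoidHom.inl G (ZMod 3))
  apply_fun φ at hH hd3 hS
  apply_fun (Int.cast : ℤ → AddMonoidAlgebra ℤ (G × ZMod 3)) at hlam
  simp only [map_add, map_mul, map_one, map_intCast] at hH hd3 hS
  push_cast [cast_card_sdiff (subset_univ _), card_univ, Fintype.card_prod, ZMod.card, mul_one]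
    at hH hd3 hS hlam ⊢
  have hmul := map_grp_mul_map_grp_univ φ
  have hT (i : Fin 2) : φ (grp (negSet (S i))) * φ (grp univ) = #(S i) * φ (grp univ) := by
    rw [hmul, card_negSet]
  have hg : φ (grp univ) * φ (grp univ) = Fintype.card G * φ (grp univ) := by
    rw [hmul, card_univ]
  linear_combination sum_layered_blocks_mul_conj single_zero_one_pow_three hH hd3 hS hlam
    (hmul (D 0)) (hmul (D 1)) (hmul (D 2)) (hmul (D 3)) (hmul (S 0)) (hmul (S 1)) (hT 0) (hT 1) hg
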